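/- Let m > n be positive integers and f: ℓ_1 → ℝ a Lipschitz function with f(0)=0. Then the function Q_n(f) ∘ τ_m: ℓ_1^m → ℝ has property (AF) on each hypercube C(x^{ε,0}_{h,m−1}, 2^{1−m}) ⊆ ℝ^m, for every ε ∈ {−1,1}^m and every h ∈ {0,…,2^{2m−2}−1}^m. -/

import Mathlib

noncomputable section

open Filter Topology
open scoped Classical

/-- The sign `±1` associated with a Boolean. -/
def bsgn (b : Bool) : ℝ := if b then 1 else -1

/-- The hypercube `C(y,R) = {x : max_i |x_i − y_i| ≤ R/2}` with centre `y` and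
edge length `R`. -/
def cube {n : ℕ} (y : Fin n → ℝ) (R : ℝ) : Set (Fin n → ℝ) :=
  {x | ∀ i, |x i - y i| ≤ R / 2}

/-- The vertex `A_δ(y,R) = y + (R/2)δ` of the hypercube `C(y,R)`, `δ ∈ {−1,1}^n`. -/
def vertex {n : ℕ} (y : Fin n → ℝ) (R : ℝ) (δ : Fin n → Bool) : Fin n → ℝ :=
  fun i => y i + R / 2 * bsgn (δ i)

/-- A function `Φ` has property (AF) on a (convex) set `B ⊆ ℝ^n` if its restriction
to every segment contained in `B` and parallel to a coordinate axis is affine. -/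
def HasAF {n : ℕ} (B : Set (Fin n → ℝ)) (Φ : (Fin n → ℝ) → ℝ) : Prop :=
  ∀ a b : Fin n → ℝ, a ∈ B → b ∈ B → (∃ i : Fin n, ∀ j, j ≠ i → a j = b j) →
    ∀ t : ℝ, t ∈ Set.Icc (0 : ℝ) 1 →
      Φ (fun j => a j + t * (b j - a j)) = (1 - t) * Φ a + t * Φ b

/-- The coordinatewise-affine interpolation `Λ(f, C(y,R))` of `f` on the hypercube
`C(y,R)`: the unique function with property (AF) on `C(y,R)` agreeing with `f` at
all `2^n` vertices (written here in its explicit multilinear form). -/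
def lam {n : ℕ} (f : (Fin n → ℝ) → ℝ) (y : Fin n → ℝ) (R : ℝ)
    (x : Fin n → ℝ) : ℝ :=
  ∑ δ : Fin n → Bool,
    (∏ i, if δ i then (x i - y i + R / 2) / R else 1 - (x i - y i + R / 2) / R) *
      f (vertex y R δ)

/-- `g` is `L`-Lipschitz on the set `S` with respect to the `ℓ₁`-norm on `ℝ^n`. -/
def LipOnL1 {n : ℕ} (L : ℝ) (S : Set (Fin n → ℝ)) (g : (Fin n → ℝ) → ℝ) : Prop :=
  ∀ x ∈ S, ∀ x' ∈ S, |g x - g x'| ≤ L * ∑ i, |x i - x' i|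
/-- `π_R(t)`: the nearest point to `t` in `[−R/2, R/2]`. -/
def clamp (R t : ℝ) : ℝ := max (-(R / 2)) (min (R / 2) t)

/-- `Π_R^n(x) = (π_R(x_1),…,π_R(x_n))`, the nearest-point retraction onto `C(0,R)`. -/
def clampCube {n : ℕ} (R : ℝ) (x : Fin n → ℝ) : Fin n → ℝ := fun i => clamp R (x i)

/-- The point `x^{ε,y}_{h,k} = y + 2^{−k−1} ε + 2^{−k} (ε_1 h_1, …, ε_n h_n)`. -/
def gridPt {n : ℕ} (ε : Fin n → Bool) (y : Fin n → ℝ) (h : Fin n → ℕ) (k : ℕ) :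
    Fin n → ℝ :=
  fun i => y i + (2 : ℝ) ^ (-(k : ℤ) - 1) * bsgn (ε i) +
    (2 : ℝ) ^ (-(k : ℤ)) * (bsgn (ε i) * (h i : ℝ))

/-- For `v ∈ C(0,2^n)`, an admissible choice of `ε ∈ {−1,1}^n` for a cube
`C(x^{ε,0}_{h,n−1}, 2^{1−n})` of the canonical tiling containing `v`. -/
def epsChoice {n : ℕ} (v : Fin n → ℝ) : Fin n → Bool := fun i => 0 ≤ v i

/-- For `v ∈ C(0,2^n)`, an admissible choice of `h ∈ {0,…,2^{2n−2}−1}^n` for a cube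
`C(x^{ε,0}_{h,n−1}, 2^{1−n})` of the canonical tiling containing `v`. -/
def hChoice (n : ℕ) (v : Fin n → ℝ) : Fin n → ℕ :=
  fun i => min (Int.toNat ⌊|v i| * (2 : ℝ) ^ ((n : ℤ) - 1)⌋) (2 ^ (2 * n - 2) - 1)

/-- The operator `P_n`: `P_n(g)(u) = Λ(g, C(x^{ε,0}_{h,n−1}, 2^{1−n}))(Π_{2^n}^n(u))`,
where `ε ∈ {−1,1}^n` and `h ∈ {0,…,2^{2n−2}−1}^n` are (admissibly) chosen so that
`Π_{2^n}^n(u) ∈ C(x^{ε,0}_{h,n−1}, 2^{1−n})`. -/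
def Pn (n : ℕ) (g : (Fin n → ℝ) → ℝ) (u : Fin n → ℝ) : ℝ :=
  lam g
    (gridPt (epsChoice (clampCube ((2 : ℝ) ^ n) u)) 0
      (hChoice n (clampCube ((2 : ℝ) ^ n) u)) (n - 1))
    ((2 : ℝ) ^ (1 - (n : ℤ)))
    (clampCube ((2 : ℝ) ^ n) u)

/-- The Banach space `ℓ₁` of absolutely summable real sequences. -/
abbrev EllOne : Type := lp (fun _ : ℕ => ℝ) 1

/-- The canonical injection `τ_n : ℓ₁^n → ℓ₁`, `τ_n(x) = (x_1,…,x_n,0,0,…)`. -/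
def tau (n : ℕ) (x : Fin n → ℝ) : EllOne :=
  ⟨fun j => if h : j < n then x ⟨j, h⟩ else 0, by
    refine (memℓp_zero ?_).of_exponent_ge (by simp)
    refine (Set.finite_Iio n).subset fun j hj => ?_
    simp only [Set.mem_setOf_eq] at hj
    by_contra hc
    simp only [Set.mem_Iio, not_lt] at hc
    exact hj (dif_neg (not_lt.mpr hc))⟩

/-- The canonical projection `ρ_n : ℓ₁ → ℓ₁^n`, `ρ_n(x) = (x_1,…,x_n)`. -/
def rho (n : ℕ) (x : EllOne) : Fin n → ℝ := fun i => x (i : ℕ)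

/-- The operator `Q_n` on `Lip_0(ℓ₁)`: `Q_n(f)(x) = P_n(f ∘ τ_n)(ρ_n(x))`. -/
def Qn (n : ℕ) (f : EllOne → ℝ) (x : EllOne) : ℝ :=
  Pn n (fun u => f (tau n u)) (rho n x)

/-- `V_n`: the set of all vertices of all the cubes `C(x^{ε,0}_{h,n−1}, 2^{1−n})`,
`ε ∈ {−1,1}^n`, `h ∈ {0,…,2^{2n−2}−1}^n`. -/
def Vn (n : ℕ) : Set (Fin n → ℝ) :=
  {v | ∃ (ε : Fin n → Bool) (h : Fin n → ℕ) (δ : Fin n → Bool),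
    (∀ i, h i ≤ 2 ^ (2 * n - 2) - 1) ∧
    v = vertex (gridPt ε 0 h (n - 1)) ((2 : ℝ) ^ (1 - (n : ℤ))) δ}

open scoped NNReal

/-!
On the first `n` coordinates, `Q_n(f) ∘ τ_m` is `P_n(f ∘ τ_n)`, so a segment in a direction `i ≥ n`
is seen as a single point. For `i < n`, the `i`-th coordinates of a cube of level `m ≥ n` lie in
one dyadic interval of length `2^{1-n}`. The clamp `π_{2^n}` is the identity or constant on such
an interval, so the clamped segment is traversed affinely and stays in one cube of the level-`n`
tiling. Neighbouring cubes of the tiling interpolate the same values on their common face, hence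
along the segment `P_n(f ∘ τ_n)` agrees with a single coordinatewise-affine interpolation `Λ`.
-/

def affineWeight (b : Bool) (s : ℝ) : ℝ := if b then s else 1 - s

def cubeCoord {n : ℕ} (y : Fin n → ℝ) (R : ℝ) (x : Fin n → ℝ) (i : Fin n) : ℝ :=
  (x i - y i + R / 2) / R

theorem lam_eq_sum {n : ℕ} (g : (Fin n → ℝ) → ℝ) (y : Fin n → ℝ) (R : ℝ) (x : Fin n → ℝ) :
    lam g y R x =
      ∑ δ : Fin n → Bool, (∏ i, affineWeight (δ i) (cubeCoord y R x i)) * g (vertex y R δ) :=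
  rfl

theorem lam_eq_sum_insertNth {k : ℕ} (g : (Fin (k + 1) → ℝ) → ℝ) (y : Fin (k + 1) → ℝ)
    (R : ℝ) (x : Fin (k + 1) → ℝ) (i : Fin (k + 1)) :
    lam g y R x =
      ∑ δ : Fin k → Bool, (∏ j, affineWeight (δ j) (cubeCoord y R x (i.succAbove j))) *
        (cubeCoord y R x i * g (vertex y R (i.insertNth true δ)) +
          (1 - cubeCoord y R x i) * g (vertex y R (i.insertNth false δ))) := by
  rw [lam_eq_sum, ← (Fin.insertNthEquiv (fun _ => Bool) i).sum_comp, Fintype.sum_prod_type,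
    Fintype.sum_bool, ← Finset.sum_add_distrib]
  refine Finset.sum_congr rfl fun δ _ => ?_
  simp only [Fin.insertNthEquiv, Equiv.coe_fn_mk, Fin.prod_univ_succAbove _ i,
    Fin.insertNth_apply_same, Fin.insertNth_apply_succAbove, affineWeight, if_true,
    Bool.false_eq_true, if_false]
  ring

theorem lam_add_mul_sub {n : ℕ} (g : (Fin n → ℝ) → ℝ) (y : Fin n → ℝ) (R : ℝ)
    {a b : Fin n → ℝ} {i : Fin n} (hab : ∀ j, j ≠ i → a j = b j) (t : ℝ) :
    lam g y R (fun j => a j + t * (b j - a j)) = (1 - t) * lam g y R a + t * lam g y R b := by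
  cases n with
  | zero => exact i.elim0
  | succ k =>
    simp only [lam_eq_sum_insertNth g y R _ i, Finset.mul_sum, ← Finset.sum_add_distrib]
    refine Finset.sum_congr rfl fun δ _ => ?_
    have hi : cubeCoord y R (fun j => a j + t * (b j - a j)) i =
        (1 - t) * cubeCoord y R a i + t * cubeCoord y R b i := by
      simp only [cubeCoord]; ring
    have hb : ∀ j, cubeCoord y R b (i.succAbove j) = cubeCoord y R a (i.succAbove j) :=
      fun j => by simp only [cubeCoord, hab _ (Fin.succAbove_ne i j)]
    have hx : ∀ j, cubeCoord y R (fun j => a j + t * (b j - a j)) (i.succAbove j) =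
        cubeCoord y R a (i.succAbove j) :=
      fun j => by simp only [cubeCoord, hab _ (Fin.succAbove_ne i j), sub_self, mul_zero, add_zero]
    rw [hi]
    simp only [hb, hx]
    ring

/-- The neighbour of `C(y,R)` across the face `x_i = y_i + R/2` has the vertices of that face in
common with it, and on the face the interpolation weights of all other vertices vanish. -/

theorem lam_update_add {n : ℕ} (g : (Fin n → ℝ) → ℝ) (y w : Fin n → ℝ) {R : ℝ} (hR : R ≠ 0)
    {i : Fin n} (hw : w i = y i + R / 2) :
    lam g (Function.update y i (y i + R)) R w = lam g y R w := by
  cases n with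
  | zero => exact i.elim0
  | succ k =>
    have hcoord : ∀ j, cubeCoord (Function.update y i (y i + R)) R w (i.succAbove j) =
        cubeCoord y R w (i.succAbove j) :=
      fun j => by simp only [cubeCoord, Function.update_of_ne (Fin.succAbove_ne i j)]
    have hy : cubeCoord y R w i = 1 := by
      rw [cubeCoord, hw, show y i + R / 2 - y i + R / 2 = R by ring, div_self hR]
    have hy' : cubeCoord (Function.update y i (y i + R)) R w i = 0 := by
      rw [cubeCoord, hw, Function.update_self, show y i + R / 2 - (y i + R) + R / 2 = 0 by ring,
        zero_div]
    have hvertex : ∀ δ : Fin k → Bool, vertex (Function.update y i (y i + R)) R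
        (i.insertNth false δ) = vertex y R (i.insertNth true δ) := fun δ => by
      funext j
      rcases eq_or_ne j i with rfl | hji
      · simp only [vertex, Function.update_self, Fin.insertNth_apply_same, bsgn,
          Bool.false_eq_true, if_false, if_true]
        ring
      · obtain ⟨j, rfl⟩ := Fin.exists_succAbove_eq hji
        simp only [vertex, Function.update_of_ne hji, Fin.insertNth_apply_succAbove]
    simp only [lam_eq_sum_insertNth g _ R w i, hcoord, hy, hy', hvertex, one_mul, sub_self,
      zero_mul, add_zero, sub_zero, zero_add]

def cellCentres (R : ℝ) : Set ℝ := {c | ∃ k : ℤ, c = (k + 1 / 2) * R}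

theorem abs_sub_cellCentre_le_iff {R x : ℝ} (k : ℤ) :
    |x - (k + 1 / 2) * R| ≤ R / 2 ↔ k * R ≤ x ∧ x ≤ (k + 1) * R := by
  rw [abs_le]
  constructor <;> rintro ⟨h₁, h₂⟩ <;> constructor <;> linarith

theorem bsgn_mul_mem_cellCentres {R c : ℝ} (b : Bool) (hc : c ∈ cellCentres R) :
    bsgn b * c ∈ cellCentres R := by
  obtain ⟨k, rfl⟩ := hc
  cases b
  · exact ⟨-k - 1, by simp only [bsgn, Bool.false_eq_true, if_false]; push_cast; ring⟩
  · exact ⟨k, by simp only [bsgn, if_true]; ring⟩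

theorem abs_bsgn (b : Bool) : |bsgn b| = 1 := by
  cases b <;> simp [bsgn]

theorem cellCentre_eq_or {R x c c' : ℝ} (hR : 0 < R) (hc : c ∈ cellCentres R)
    (hc' : c' ∈ cellCentres R) (hx : |x - c| ≤ R / 2) (hx' : |x - c'| ≤ R / 2) :
    c' = c ∨ (c' = c + R ∧ x = c + R / 2) ∨ (c' = c - R ∧ x = c - R / 2) := by
  obtain ⟨k, rfl⟩ := hc
  obtain ⟨k', rfl⟩ := hc'
  rw [abs_sub_cellCentre_le_iff] at hx hx'
  have hle : ((k' - k : ℤ) : ℝ) * R < 2 * R := by push_cast; linarith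
  have hge : -2 * R < ((k' - k : ℤ) : ℝ) * R := by push_cast; linarith
  have hle' : k' - k < 2 := by exact_mod_cast lt_of_mul_lt_mul_right hle hR.le
  have hge' : -2 < k' - k := by exact_mod_cast lt_of_mul_lt_mul_right hge hR.le
  obtain rfl | rfl | rfl : k' = k ∨ k' = k + 1 ∨ k' = k - 1 := by omega
  · exact Or.inl rfl
  · refine Or.inr (Or.inl ⟨by push_cast; ring, ?_⟩)
    push_cast at hx'
    linarith
  · refine Or.inr (Or.inr ⟨by push_cast; ring, ?_⟩)
    push_cast at hx'
    linarith

theorem exists_cellCentre_natCast_mul {δ c : ℝ} (hδ : 0 < δ) {K : ℕ} (hK : 0 < K)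
    (hc : c ∈ cellCentres δ) :
    ∃ c' ∈ cellCentres (K * δ), ∀ x, |x - c| ≤ δ / 2 → |x - c'| ≤ K * δ / 2 := by
  obtain ⟨z, rfl⟩ := hc
  refine ⟨((z / K : ℤ) + 1 / 2) * (K * δ), ⟨z / K, rfl⟩, fun x hx => ?_⟩
  have hlo : ((z / K : ℤ) : ℝ) * K ≤ z := by
    exact_mod_cast Int.ediv_mul_le z (by exact_mod_cast hK.ne')
  have hhi : (z : ℝ) + 1 ≤ ((z / K : ℤ) + 1) * K := by
    exact_mod_cast Int.lt_ediv_add_one_mul_self z (by exact_mod_cast hK)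
  rw [abs_sub_cellCentre_le_iff] at hx ⊢
  constructor <;> nlinarith [hx.1, hx.2]

theorem lam_update_eq {n : ℕ} (g : (Fin n → ℝ) → ℝ) (y w : Fin n → ℝ) {R : ℝ} (hR : 0 < R)
    {i : Fin n} {c : ℝ} (hy : y i ∈ cellCentres R) (hc : c ∈ cellCentres R)
    (hwy : |w i - y i| ≤ R / 2) (hwc : |w i - c| ≤ R / 2) :
    lam g (Function.update y i c) R w = lam g y R w := by
  rcases cellCentre_eq_or hR hy hc hwy hwc with rfl | ⟨rfl, hw⟩ | ⟨rfl, hw⟩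
  · rw [Function.update_eq_self]
  · exact lam_update_add g y w hR.ne' hw
  · have := lam_update_add g (Function.update y i (y i - R)) w hR.ne'
      (by rw [Function.update_self, hw]; ring)
    rwa [Function.update_self, sub_add_cancel, Function.update_idem,
      Function.update_eq_self, eq_comm] at this

theorem abs_add_mul_sub_le {p q c r t : ℝ} (hp : |p - c| ≤ r) (hq : |q - c| ≤ r)
    (ht : t ∈ Set.Icc (0 : ℝ) 1) : |p + t * (q - p) - c| ≤ r := by
  have := (convex_closedBall c r).add_smul_sub_mem (x := p) (y := q)
    (by rwa [Metric.mem_closedBall, Real.dist_eq]) (by rwa [Metric.mem_closedBall, Real.dist_eq]) ht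
  rwa [Metric.mem_closedBall, Real.dist_eq, smul_eq_mul] at this

theorem clamp_of_abs_le {L t : ℝ} (h : |t| ≤ L / 2) : clamp L t = t := by
  rw [abs_le] at h
  rw [clamp, min_eq_right h.2, max_eq_right h.1]

theorem clamp_of_half_le {L t : ℝ} (hL : 0 ≤ L) (h : L / 2 ≤ t) : clamp L t = L / 2 := by
  rw [clamp, min_eq_left h, max_eq_right (by linarith)]

theorem clamp_of_le_neg_half {L t : ℝ} (hL : 0 ≤ L) (h : t ≤ -(L / 2)) :
    clamp L t = -(L / 2) := by
  rw [clamp, min_eq_right (by linarith), max_eq_left h]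

theorem abs_clamp_le {L : ℝ} (hL : 0 ≤ L) (t : ℝ) : |clamp L t| ≤ L / 2 :=
  abs_le.2 ⟨le_max_left _ _, max_le (by linarith) (min_le_left _ _)⟩

section ClampOnCell

variable {R L c : ℝ} {N : ℕ}

theorem clamp_trichotomy (hR : 0 < R) (hL : L / 2 = N * R) (hc : c ∈ cellCentres R) :
    (∀ x, |x - c| ≤ R / 2 → clamp L x = x) ∨ (∀ x, |x - c| ≤ R / 2 → clamp L x = L / 2) ∨
      ∀ x, |x - c| ≤ R / 2 → clamp L x = -(L / 2) := by
  obtain ⟨k, rfl⟩ := hc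
  simp only [abs_sub_cellCentre_le_iff]
  have hL0 : 0 ≤ L := by nlinarith [N.cast_nonneg (α := ℝ)]
  rcases le_or_gt (N : ℤ) k with hk | hk
  · have hk : (N : ℝ) * R ≤ k * R := by gcongr; exact_mod_cast hk
    exact Or.inr (Or.inl fun x hx => clamp_of_half_le hL0 (by linarith [hx.1]))
  rcases le_or_gt (k + 1) (-N : ℤ) with hk' | hk'
  · have hk' : ((k : ℝ) + 1) * R ≤ -N * R := by gcongr; exact_mod_cast hk'
    exact Or.inr (Or.inr fun x hx => clamp_of_le_neg_half hL0 (by linarith [hx.2]))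
  · have h₁ : -(N : ℝ) * R ≤ k * R := by gcongr; exact_mod_cast (by omega : -(N : ℤ) ≤ k)
    have h₂ : ((k : ℝ) + 1) * R ≤ N * R := by gcongr; exact_mod_cast (by omega : k + 1 ≤ N)
    exact Or.inl fun x hx => clamp_of_abs_le (abs_le.2 ⟨by linarith [hx.1], by linarith [hx.2]⟩)

theorem exists_cellCentre_clamp (hR : 0 < R) (hL : L / 2 = N * R) (hc : c ∈ cellCentres R) :
    ∃ c' ∈ cellCentres R, ∀ x, |x - c| ≤ R / 2 → |clamp L x - c'| ≤ R / 2 := by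
  rcases clamp_trichotomy hR hL hc with h | h | h
  · exact ⟨c, hc, fun x hx => by rwa [h x hx]⟩
  · refine ⟨((N - 1 : ℤ) + 1 / 2) * R, ⟨N - 1, rfl⟩, fun x hx => ?_⟩
    rw [h x hx, hL, abs_sub_cellCentre_le_iff]
    push_cast
    constructor <;> linarith
  · refine ⟨((-N : ℤ) + 1 / 2) * R, ⟨-N, rfl⟩, fun x hx => ?_⟩
    rw [h x hx, hL, abs_sub_cellCentre_le_iff]
    push_cast
    constructor <;> linarith

theorem clamp_add_mul_sub (hR : 0 < R) (hL : L / 2 = N * R) (hc : c ∈ cellCentres R)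
    {p q t : ℝ} (hp : |p - c| ≤ R / 2) (hq : |q - c| ≤ R / 2) (ht : t ∈ Set.Icc (0 : ℝ) 1) :
    clamp L (p + t * (q - p)) = clamp L p + t * (clamp L q - clamp L p) := by
  have hpq := abs_add_mul_sub_le hp hq ht
  rcases clamp_trichotomy hR hL hc with h | h | h <;> rw [h _ hp, h _ hq, h _ hpq] <;> ring

end ClampOnCell

theorem gridPt_zero_apply {n : ℕ} (ε : Fin n → Bool) (h : Fin n → ℕ) (k : ℕ) (j : Fin n) :
    gridPt ε 0 h k j = bsgn (ε j) * ((h j + 1 / 2) * (2 : ℝ) ^ (-(k : ℤ))) := by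
  simp only [gridPt, Pi.zero_apply, zero_add, zpow_sub₀ (two_ne_zero' ℝ), zpow_one]
  ring

theorem two_zpow_neg_natSub_one {n : ℕ} (hn : 0 < n) :
    (2 : ℝ) ^ (-((n - 1 : ℕ) : ℤ)) = 2 ^ (1 - (n : ℤ)) := by
  rw [Nat.cast_sub hn, Nat.cast_one, neg_sub]

theorem gridPt_mem_cellCentres {n : ℕ} (ε : Fin n → Bool) (h : Fin n → ℕ) {k : ℕ} (hk : 0 < k)
    (j : Fin n) : gridPt ε 0 h (k - 1) j ∈ cellCentres ((2 : ℝ) ^ (1 - (k : ℤ))) := by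
  rw [gridPt_zero_apply, two_zpow_neg_natSub_one hk]
  exact bsgn_mul_mem_cellCentres _ ⟨h j, by push_cast; ring⟩

theorem natCast_min_toNat_floor_le_and_le {v : ℝ} {M : ℕ} (hM : 0 < M) (hv : 0 ≤ v) (hvM : v ≤ M) :
    ((min ⌊v⌋.toNat (M - 1) : ℕ) : ℝ) ≤ v ∧ v ≤ (min ⌊v⌋.toNat (M - 1) : ℕ) + 1 := by
  rw [Int.floor_toNat]
  rcases le_total ⌊v⌋₊ (M - 1) with h | h
  · rw [min_eq_left h]
    exact ⟨Nat.floor_le hv, (Nat.lt_floor_add_one v).le⟩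
  · rw [min_eq_right h]
    refine ⟨(Nat.cast_le.2 h).trans (Nat.floor_le hv), ?_⟩
    rw [Nat.cast_pred hM]
    linarith

/-- The centre of the cube of the tiling on which `P_n` interpolates at the point `w`. -/

def tileCentre (n : ℕ) (w : Fin n → ℝ) : Fin n → ℝ :=
  gridPt (epsChoice w) 0 (hChoice n w) (n - 1)

theorem tileCentre_apply_congr {n : ℕ} {w w' : Fin n → ℝ} {j : Fin n} (h : w j = w' j) :
    tileCentre n w j = tileCentre n w' j := by
  simp only [tileCentre, gridPt, epsChoice, hChoice, h]

theorem tileCentre_mem_cellCentres {n : ℕ} (w : Fin n → ℝ) (j : Fin n) :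
    tileCentre n w j ∈ cellCentres ((2 : ℝ) ^ (1 - (n : ℤ))) :=
  gridPt_mem_cellCentres _ _ j.pos j

theorem abs_sub_tileCentre_le {n : ℕ} {w : Fin n → ℝ} {j : Fin n}
    (hw : |w j| ≤ (2 : ℝ) ^ n / 2) :
    |w j - tileCentre n w j| ≤ (2 : ℝ) ^ (1 - (n : ℤ)) / 2 := by
  have hn : 0 < n := j.pos
  rw [← zpow_natCast, div_eq_mul_inv, ← zpow_sub_one₀ (two_ne_zero' ℝ)] at hw
  set S : ℝ := 2 ^ ((n : ℤ) - 1)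
  have hS : 0 < S := by positivity
  have hR : (2 : ℝ) ^ (1 - (n : ℤ)) = S⁻¹ := by rw [← zpow_neg, neg_sub]
  have hM : (((2 ^ (2 * n - 2) : ℕ)) : ℝ) = S * S := by
    rw [← zpow_add₀ (two_ne_zero' ℝ), Nat.cast_pow, Nat.cast_ofNat, ← zpow_natCast]
    congr 1
    omega
  obtain ⟨hlo, hhi⟩ := natCast_min_toNat_floor_le_and_le (v := |w j| * S) (Nat.two_pow_pos _)
    (by positivity) (by rw [hM]; gcongr)
  set q : ℕ := min ⌊|w j| * S⌋.toNat (2 ^ (2 * n - 2) - 1)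
  have hcentre : tileCentre n w j = bsgn (decide (0 ≤ w j)) * ((q + 1 / 2) * S⁻¹) := by
    rw [tileCentre, gridPt_zero_apply, two_zpow_neg_natSub_one hn, hR]
    rfl
  have hsign : w j = bsgn (decide (0 ≤ w j)) * |w j| := by
    rcases le_or_gt 0 (w j) with h | h
    · simp [bsgn, h, abs_of_nonneg h]
    · simp [bsgn, h.not_ge, abs_of_neg h]
  rw [hcentre, hR]
  nth_rewrite 1 [hsign]
  rw [← mul_sub, abs_mul, abs_bsgn, one_mul, abs_le]
  have hlo' : q * S⁻¹ ≤ |w j| := by rw [← div_eq_mul_inv]; exact (div_le_iff₀ hS).2 hlo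
  have hhi' : |w j| ≤ (q + 1) * S⁻¹ := by rw [← div_eq_mul_inv]; exact (le_div_iff₀ hS).2 hhi
  constructor <;> linarith

theorem natCast_two_pow_mul_two_zpow {k l : ℕ} (hkl : k ≤ l) :
    ((2 ^ (l - k) : ℕ) : ℝ) * (2 : ℝ) ^ (1 - (l : ℤ)) = 2 ^ (1 - (k : ℤ)) := by
  rw [Nat.cast_pow, Nat.cast_ofNat, ← zpow_natCast, ← zpow_add₀ (two_ne_zero' ℝ)]
  congr 1
  omega

theorem Pn_add_mul_sub {n : ℕ} (g : (Fin n → ℝ) → ℝ) {u v : Fin n → ℝ} {i : Fin n}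
    (huv : ∀ j, j ≠ i → u j = v j) {c : ℝ} (hc : c ∈ cellCentres ((2 : ℝ) ^ (1 - (n : ℤ))))
    (hu : |u i - c| ≤ (2 : ℝ) ^ (1 - (n : ℤ)) / 2) (hv : |v i - c| ≤ (2 : ℝ) ^ (1 - (n : ℤ)) / 2)
    {t : ℝ} (ht : t ∈ Set.Icc (0 : ℝ) 1) :
    Pn n g (fun j => u j + t * (v j - u j)) = (1 - t) * Pn n g u + t * Pn n g v := by
  have hn : 0 < n := i.pos
  have hL : (2 : ℝ) ^ n / 2 = ((2 ^ (2 * n - 2) : ℕ) : ℝ) * 2 ^ (1 - (n : ℤ)) := by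
    rw [Nat.cast_pow, Nat.cast_ofNat, ← zpow_natCast, ← zpow_natCast, div_eq_mul_inv,
      ← zpow_neg_one, ← zpow_add₀ (two_ne_zero' ℝ), ← zpow_add₀ (two_ne_zero' ℝ)]
    congr 1
    omega
  set R : ℝ := 2 ^ (1 - (n : ℤ))
  have hR : 0 < R := by positivity
  obtain ⟨c', hc', hclamp⟩ := exists_cellCentre_clamp hR hL hc
  set Y := Function.update (tileCentre n (clampCube (2 ^ n) u)) i c'
  have hPn : ∀ z : Fin n → ℝ, (∀ j, j ≠ i → z j = u j) → |z i - c| ≤ R / 2 →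
      Pn n g z = lam g Y R (clampCube (2 ^ n) z) := by
    intro z hz hzc
    have hY : Y = Function.update (tileCentre n (clampCube (2 ^ n) z)) i c' := by
      funext j
      rcases eq_or_ne j i with rfl | hj
      · simp only [Y, Function.update_self]
      · simp only [Y, Function.update_of_ne hj]
        exact tileCentre_apply_congr (by simp only [clampCube, hz j hj])
    rw [hY, lam_update_eq g _ _ hR (tileCentre_mem_cellCentres _ i) hc'
      (abs_sub_tileCentre_le (abs_clamp_le (by positivity) _)) (hclamp _ hzc)]
    rfl
  have hclampCube : clampCube (2 ^ n) (fun j => u j + t * (v j - u j)) =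
      fun j => clampCube (2 ^ n) u j + t * (clampCube (2 ^ n) v j - clampCube (2 ^ n) u j) := by
    funext j
    rcases eq_or_ne j i with rfl | hj
    · exact clamp_add_mul_sub hR hL hc hu hv ht
    · simp only [clampCube, huv j hj, sub_self, mul_zero, add_zero]
  rw [hPn _ (fun j hj => by simp only [huv j hj, sub_self, mul_zero, add_zero])
      (abs_add_mul_sub_le hu hv ht), hPn u (fun _ _ => rfl) hu,
    hPn v (fun j hj => (huv j hj).symm) hv, hclampCube]
  exact lam_add_mul_sub g Y R (i := i) (fun j hj => by simp only [clampCube, huv j hj]) t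

theorem Qn_tau_eq_Pn {m n : ℕ} (hnm : n ≤ m) (f : EllOne → ℝ) (u : Fin m → ℝ) :
    Qn n f (tau m u) = Pn n (fun v => f (tau n v)) (fun j => u (Fin.castLE hnm j)) := by
  unfold Qn
  congr 1
  funext j
  exact dif_pos (j.2.trans_le hnm)

theorem Qn_comp_tau_hasAF_general (m n : ℕ) (hnm : n < m)
    (f : EllOne → ℝ)
    (ε : Fin m → Bool) (h : Fin m → ℕ) :
    HasAF (cube (gridPt ε 0 h (m - 1)) ((2 : ℝ) ^ (1 - (m : ℤ))))
      (fun u => Qn n f (tau m u)) := by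
  intro a b ha hb ⟨i, hab⟩ t ht
  simp only [Qn_tau_eq_Pn hnm.le]
  by_cases hi : (i : ℕ) < n
  · obtain ⟨c, hc, hcell⟩ := exists_cellCentre_natCast_mul (by positivity)
      (Nat.two_pow_pos (m - n)) (gridPt_mem_cellCentres ε h (k := m) (by omega) i)
    rw [natCast_two_pow_mul_two_zpow hnm.le] at hc hcell
    have hab' : ∀ j : Fin n, j ≠ ⟨i, hi⟩ → a (Fin.castLE hnm.le j) = b (Fin.castLE hnm.le j) :=
      fun j hj => hab _ fun e => hj (Fin.ext (show (j : ℕ) = i from congrArg Fin.val e))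
    exact Pn_add_mul_sub _ hab' hc (hcell _ (ha i)) (hcell _ (hb i)) ht
  · have hba : ∀ j : Fin n, b (Fin.castLE hnm.le j) = a (Fin.castLE hnm.le j) :=
      fun j => (hab _ fun e => hi (e ▸ j.2)).symm
    simp only [hba, sub_self, mul_zero, add_zero]
    ring

/-- **Statement 13.** For `m > n ≥ 1` and a Lipschitz `f : ℓ₁ → ℝ` with `f(0) = 0`,
the function `Q_n(f) ∘ τ_m : ℓ₁^m → ℝ` has property (AF) on each hypercube
`C(x^{ε,0}_{h,m−1}, 2^{1−m}) ⊆ ℝ^m`, for every `ε ∈ {−1,1}^m` and every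
`h ∈ {0,…,2^{2m−2}−1}^m`. -/
theorem Qn_comp_tau_hasAF (m n : ℕ) (hn : 0 < n) (hnm : n < m)
    (f : EllOne → ℝ) (hf : ∃ K : ℝ≥0, LipschitzWith K f) (hf0 : f 0 = 0)
    (ε : Fin m → Bool) (h : Fin m → ℕ) (hh : ∀ i, h i ≤ 2 ^ (2 * m - 2) - 1) :
    HasAF (cube (gridPt ε 0 h (m - 1)) ((2 : ℝ) ^ (1 - (m : ℤ))))
      (fun u => Qn n f (tau m u)) :=
  Qn_comp_tau_hasAF_general m n hnm f ε h
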